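/- If x : ℝ → ℝ is twice differentiable and satisfies the Leah differential equation x''(t) + sgn(x(t))·|x(t)|^{1/3} = 0 for all t, then the Hamiltonian function t ↦ (x'(t))²/2 + (3/4)·|x(t)|^{4/3} is constant on ℝ. -/

import Mathlib

/-! The Hamiltonian is the energy `x'²/2 + V(x)` of Newton's equation `x'' = -V'(x)` for the
potential `V(u) = (3/4)|u|^(4/3)`; along any solution its derivative is `x'(x'' + V'(x)) = 0`.
The only point needing care is that `V` is differentiable also at `0`, which holds because the
exponent `4/3` exceeds `1`. -/

open Real

lemma abs_rpow_sub_two_mul_self (u p : ℝ) : |u| ^ (p - 2) * u = sign u * |u| ^ (p - 1) := by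
  rcases eq_or_ne u 0 with rfl | hu
  · simp
  · have habs : 0 < |u| := abs_pos.mpr hu
    rw [show p - 1 = (p - 2) + 1 by ring, rpow_add habs, rpow_one]
    rcases hu.lt_or_gt with hneg | hpos
    · rw [sign_of_neg hneg, abs_of_neg hneg]; ring
    · rw [sign_of_pos hpos, abs_of_pos hpos]; ring

lemma hasDerivAt_abs_rpow_eq_sign_mul (u : ℝ) {p : ℝ} (hp : 1 < p) :
    HasDerivAt (fun v : ℝ ↦ |v| ^ p) (p * (sign u * |u| ^ (p - 1))) u := by
  simpa only [mul_assoc, abs_rpow_sub_two_mul_self] using hasDerivAt_abs_rpow u hp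

theorem exists_energy_eq_of_deriv_deriv_add_eq_zero {V f x : ℝ → ℝ}
    (hV : ∀ u, HasDerivAt V (f u) u) (hx : Differentiable ℝ x)
    (hx' : Differentiable ℝ (deriv x)) (heq : ∀ t, deriv (deriv x) t + f (x t) = 0) :
    ∃ c : ℝ, ∀ t : ℝ, deriv x t ^ 2 / 2 + V (x t) = c := by
  set E : ℝ → ℝ := fun t ↦ deriv x t ^ 2 / 2 + V (x t)
  have hE : ∀ t, HasDerivAt E (deriv x t * (deriv (deriv x) t + f (x t))) t := by
    intro t
    refine (((hx' t).hasDerivAt.pow 2).div_const 2).add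
      ((hV (x t)).comp t (hx t).hasDerivAt) |>.congr_deriv ?_
    push_cast
    ring
  refine ⟨E 0, fun t ↦ is_const_of_deriv_eq_zero (fun t ↦ (hE t).differentiableAt)
    (fun t ↦ by rw [(hE t).deriv, heq, mul_zero]) t 0⟩

/-- For any twice-differentiable solution of the Leah differential equation
`x'' + sgn(x)·|x|^(1/3) = 0`, the Hamiltonian
`t ↦ (x'(t))²/2 + (3/4)·|x(t)|^(4/3)` is constant on `ℝ`. -/
theorem leah_hamiltonian_constant (x : ℝ → ℝ)
    (hx : Differentiable ℝ x) (hx' : Differentiable ℝ (deriv x))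
    (heq : ∀ t : ℝ, deriv (deriv x) t + Real.sign (x t) * |x t| ^ ((1 : ℝ)/3) = 0) :
    ∃ c : ℝ, ∀ t : ℝ,
      (deriv x t) ^ 2 / 2 + (3/4) * |x t| ^ ((4 : ℝ)/3) = c := by
  have hV : ∀ u : ℝ, HasDerivAt (fun v ↦ (3/4) * |v| ^ ((4 : ℝ)/3))
      (sign u * |u| ^ ((1 : ℝ)/3)) u := by
    intro u
    refine (hasDerivAt_abs_rpow_eq_sign_mul u (by norm_num : (1 : ℝ) < 4/3)).const_mul (3/4)
      |>.congr_deriv ?_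
    rw [show (4 : ℝ) / 3 - 1 = 1 / 3 by norm_num]
    ring
  exact exists_energy_eq_of_deriv_deriv_add_eq_zero hV hx hx' heq
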